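/- Geodesic midpoint log-concavity of Lieb's formulation: let (B, p) be a feasible Brascamp-Lieb datum with B_j ∈ R^{n_j × n} each having full row rank and p_j ≥ 0, and define for positive definite A_j: L(A_1,...,A_m) := Σ_j p_j log det(A_j) − log det(Σ_j p_j B_j^T A_j B_j). Then for all positive definite tuples (P_j), (Q_j): L(P_1 # Q_1, ..., P_m # Q_m) ≥ (1/2) L(P_1,...,P_m) + (1/2) L(Q_1,...,Q_m). -/

import Mathlib

open Matrix

/-- Real power of a matrix via the spectral decomposition (defined for Hermitian input). -/
noncomputable def mpow {d : ℕ} (A : Matrix (Fin d) (Fin d) ℝ) (t : ℝ) : Matrix (Fin d) (Fin d) ℝ :=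
  if hA : A.IsHermitian then
    (hA.eigenvectorUnitary : Matrix (Fin d) (Fin d) ℝ) *
      Matrix.diagonal (fun i => hA.eigenvalues i ^ t) *
      star (hA.eigenvectorUnitary : Matrix (Fin d) (Fin d) ℝ)
  else A

/-- The geodesic `X #ₜ Y = X^{1/2} (X^{-1/2} Y X^{-1/2})^t X^{1/2}`. -/
noncomputable def geo {d : ℕ} (X Y : Matrix (Fin d) (Fin d) ℝ) (t : ℝ) : Matrix (Fin d) (Fin d) ℝ :=
  mpow X (1/2) * mpow (mpow X (-(1/2)) * Y * mpow X (-(1/2))) t * mpow X (1/2)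

/-- The matrix geometric mean `X # Y`. -/
noncomputable def gmean {d : ℕ} (X Y : Matrix (Fin d) (Fin d) ℝ) : Matrix (Fin d) (Fin d) ℝ :=
  geo X Y (1/2)

/-!
Write `G_j = P_j # Q_j`. It is the positive definite solution of the Riccati equation
`G P⁻¹ G = Q`, so `(det G_j)² = det P_j · det Q_j`, which takes care of the first sum in `L`.
The same equation says that the Schur complement of the block matrix `[[P_j, G_j], [G_j, Q_j]]`
vanishes, so this block matrix is positive semidefinite. Applying the positive map
`A ↦ ∑ p_j B_jᵀ A_j B_j` blockwise yields a positive semidefinite block matrix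
`[[X, Z], [Z, Y]]`, whose Schur complement gives `Z X⁻¹ Z ≤ Y` and hence
`(det Z)² ≤ det X · det Y`.
-/

open scoped MatrixOrder

section mpow

variable {d : ℕ} {A : Matrix (Fin d) (Fin d) ℝ}

lemma mpow_eq_cfc (hA : A.IsHermitian) (t : ℝ) : mpow A t = cfc (fun x : ℝ => x ^ t) A := by
  rw [hA.cfc_eq, IsHermitian.cfc, mpow, dif_pos hA]
  simp [Function.comp_def]

lemma Matrix.PosDef.spectrum_pos (hA : A.PosDef) : ∀ x ∈ spectrum ℝ A, 0 < x :=
  (StarOrderedRing.isStrictlyPositive_iff_spectrum_pos (R := ℝ) A hA.1).1 hA.isStrictlyPositive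

lemma mpow_zero (hA : A.IsHermitian) : mpow A 0 = 1 := by
  simpa [mpow_eq_cfc hA] using cfc_const_one ℝ A

lemma mpow_one (hA : A.IsHermitian) : mpow A 1 = A := by
  rw [mpow_eq_cfc hA]
  simp only [Real.rpow_one]
  exact cfc_id' ℝ A hA

lemma mpow_posDef (hA : A.PosDef) (t : ℝ) : (mpow A t).PosDef := by
  rw [mpow_eq_cfc hA.1, ← isStrictlyPositive_iff_posDef]
  exact (cfc_isStrictlyPositive_iff _ _ (A.finite_real_spectrum.continuousOn _) hA.1).2
    fun x hx => Real.rpow_pos_of_pos (hA.spectrum_pos x hx) t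

lemma mpow_mul_mpow (hA : A.PosDef) (s t : ℝ) : mpow A s * mpow A t = mpow A (s + t) := by
  rw [mpow_eq_cfc hA.1, mpow_eq_cfc hA.1, mpow_eq_cfc hA.1,
    ← cfc_mul _ _ A (A.finite_real_spectrum.continuousOn _)
      (A.finite_real_spectrum.continuousOn _)]
  exact cfc_congr fun x hx => (Real.rpow_add (hA.spectrum_pos x hx) s t).symm

lemma mpow_mul_mpow_neg (hA : A.PosDef) (t : ℝ) : mpow A t * mpow A (-t) = 1 := by
  rw [mpow_mul_mpow hA, add_neg_cancel, mpow_zero hA.1]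

lemma mpow_half_mul_mpow_half (hA : A.PosDef) : mpow A (1/2) * mpow A (1/2) = A := by
  rw [mpow_mul_mpow hA]
  norm_num [mpow_one hA.1]

lemma mpow_neg_half_mul_mul_mpow_neg_half (hA : A.PosDef) :
    mpow A (-(1/2)) * A * mpow A (-(1/2)) = 1 := by
  calc mpow A (-(1/2)) * A * mpow A (-(1/2))
      = mpow A (-(1/2)) * mpow A 1 * mpow A (-(1/2)) := by rw [mpow_one hA.1]
    _ = 1 := by rw [mpow_mul_mpow hA, mpow_mul_mpow hA]; norm_num [mpow_zero hA.1]

end mpow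

namespace Matrix

lemma one_le_det_of_one_le {n : Type*} [Fintype n] [DecidableEq n] {M : Matrix n n ℝ}
    (h : 1 ≤ M) : 1 ≤ M.det := by
  have hM : M.IsHermitian := by simpa using (le_iff.1 h).1.add isHermitian_one
  have hspec : ∀ x ∈ spectrum ℝ M, 1 ≤ x :=
    (algebraMap_le_iff_le_spectrum (A := Matrix n n ℝ) hM).1 (by simpa using h)
  rw [hM.det_eq_prod_eigenvalues]
  exact Finset.one_le_prod fun i _ => hspec _ (hM.eigenvalues_mem_spectrum_real i)

variable {d : ℕ}

lemma det_le_det_of_le {E Y : Matrix (Fin d) (Fin d) ℝ} (hE : E.PosSemidef) (h : E ≤ Y) :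
    E.det ≤ Y.det := by
  by_cases hE' : E.PosDef
  · set F := mpow E (-(1/2))
    have hFYF : 1 ≤ F * Y * F := by
      have := star_left_conjugate_le_conjugate h F
      rwa [(mpow_posDef hE' _).1.star_eq, mpow_neg_half_mul_mul_mpow_neg_half hE'] at this
    have hdetFYF := one_le_det_of_one_le hFYF
    have hdetFEF : F.det * E.det * F.det = 1 := by
      rw [← det_mul, ← det_mul, mpow_neg_half_mul_mul_mpow_neg_half hE', det_one]
    rw [det_mul, det_mul] at hdetFYF
    nlinarith [hE'.det_pos, sq_nonneg F.det]
  · rw [hE.posDef_iff_det_ne_zero, not_not] at hE'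
    rw [hE']
    exact (by simpa using hE.add (le_iff.1 h) : Y.PosSemidef).det_nonneg

lemma det_mul_det_le_of_fromBlocks_posSemidef {X Y Z : Matrix (Fin d) (Fin d) ℝ}
    (hX : X.PosDef) (h : (fromBlocks X Z Zᴴ Y).PosSemidef) : Z.det * Z.det ≤ X.det * Y.det := by
  have := hX.isUnit.invertible
  have hle : Zᴴ * X⁻¹ * Z ≤ Y := le_iff.2 ((PosDef.fromBlocks₁₁ Z Y hX).1 h)
  have hdet := det_le_det_of_le (hX.inv.posSemidef.conjTranspose_mul_mul_same Z) hle
  have hXinv : X.det * X⁻¹.det = 1 := by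
    rw [← det_mul, mul_nonsing_inv _ (isUnit_iff_ne_zero.2 hX.det_pos.ne'), det_one]
  rw [det_mul, det_mul, det_conjTranspose, star_trivial] at hdet
  nlinarith [mul_le_mul_of_nonneg_left hdet hX.det_pos.le]

end Matrix

section gmean

variable {d : ℕ} {P Q : Matrix (Fin d) (Fin d) ℝ}

lemma gmean_eq (P Q : Matrix (Fin d) (Fin d) ℝ) : gmean P Q =
    mpow P (1/2) * mpow (mpow P (-(1/2)) * Q * mpow P (-(1/2))) (1/2) * mpow P (1/2) := rfl

lemma posDef_mpow_neg_half_mul_mul_mpow_neg_half (hP : P.PosDef) (hQ : Q.PosDef) :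
    (mpow P (-(1/2)) * Q * mpow P (-(1/2))).PosDef := by
  have hT := mpow_posDef hP (-(1/2))
  have := hQ.conjTranspose_mul_mul_same (mulVec_injective_iff_isUnit.2 hT.isUnit)
  rwa [hT.1.eq] at this

lemma gmean_posDef (hP : P.PosDef) (hQ : Q.PosDef) : (gmean P Q).PosDef := by
  have hS := mpow_posDef hP (1/2)
  have hR := mpow_posDef (posDef_mpow_neg_half_mul_mul_mpow_neg_half hP hQ) (1/2)
  have := hR.conjTranspose_mul_mul_same (mulVec_injective_iff_isUnit.2 hS.isUnit)
  rwa [hS.1.eq] at this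

lemma gmean_mul_inv_mul_gmean (hP : P.PosDef) (hQ : Q.PosDef) :
    gmean P Q * P⁻¹ * gmean P Q = Q := by
  set S := mpow P (1/2)
  set T := mpow P (-(1/2))
  set R := mpow (T * Q * T) (1/2)
  have hST : S * T = 1 := mpow_mul_mpow_neg hP _
  have hTS : T * S = 1 := by simpa only [neg_neg] using mpow_mul_mpow_neg hP (-(1/2))
  have hRR : R * R = T * Q * T :=
    mpow_half_mul_mpow_half (posDef_mpow_neg_half_mul_mul_mpow_neg_half hP hQ)
  have hPinv : P⁻¹ = T * T := by
    refine inv_eq_right_inv ?_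
    rw [← mpow_half_mul_mpow_half hP]
    calc S * S * (T * T) = S * (S * T) * T := by simp only [Matrix.mul_assoc]
      _ = 1 := by rw [hST, Matrix.mul_one, hST]
  rw [gmean_eq, hPinv]
  calc S * R * S * (T * T) * (S * R * S)
      = S * R * ((S * T) * (T * S)) * R * S := by simp only [Matrix.mul_assoc]
    _ = S * (R * R) * S := by rw [hST, hTS]; simp only [Matrix.mul_one, Matrix.mul_assoc]
    _ = (S * T) * Q * (T * S) := by rw [hRR]; simp only [Matrix.mul_assoc]
    _ = Q := by rw [hST, hTS, Matrix.one_mul, Matrix.mul_one]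

lemma log_det_gmean (hP : P.PosDef) (hQ : Q.PosDef) :
    Real.log (gmean P Q).det = (1/2) * Real.log P.det + (1/2) * Real.log Q.det := by
  have hG := (gmean_posDef hP hQ).det_pos
  have hdet : (gmean P Q).det * (gmean P Q).det = P.det * Q.det := by
    have := congrArg det (gmean_mul_inv_mul_gmean hP hQ)
    rw [det_mul, det_mul, det_nonsing_inv, Ring.inverse_eq_inv'] at this
    field_simp [hP.det_pos.ne'] at this ⊢
    linarith
  have := congrArg Real.log hdet
  rw [Real.log_mul hG.ne' hG.ne', Real.log_mul hP.det_pos.ne' hQ.det_pos.ne'] at this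
  linarith

lemma fromBlocks_gmean_posSemidef (hP : P.PosDef) (hQ : Q.PosDef) :
    (fromBlocks P (gmean P Q) (gmean P Q) Q).PosSemidef := by
  have := hP.isUnit.invertible
  have hG := (gmean_posDef hP hQ).1
  conv => enter [1, 3]; rw [← hG.eq]
  rw [PosDef.fromBlocks₁₁ _ _ hP, hG.eq, gmean_mul_inv_mul_gmean hP hQ, sub_self]
  exact PosSemidef.zero

end gmean

section BrascampLieb

variable {ι : Type*} [Fintype ι] {κ : ι → Type*} [∀ j, Fintype (κ j)] {n : Type*}

def brascampLiebMap (p : ι → ℝ) (B : ∀ j, Matrix (κ j) n ℝ)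
    (A : ∀ j, Matrix (κ j) (κ j) ℝ) : Matrix n n ℝ :=
  ∑ j, p j • ((B j)ᵀ * A j * B j)

variable {p : ι → ℝ} {B : ∀ j, Matrix (κ j) n ℝ}

lemma brascampLiebMap_fromBlocks (A C D E : ∀ j, Matrix (κ j) (κ j) ℝ) :
    brascampLiebMap p (fun j => fromBlocks (B j) 0 0 (B j))
        (fun j => fromBlocks (A j) (C j) (D j) (E j)) =
      fromBlocks (brascampLiebMap p B A) (brascampLiebMap p B C) (brascampLiebMap p B D)
        (brascampLiebMap p B E) := by
  ext (i | i) (k | k) <;>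
    simp [brascampLiebMap, fromBlocks_transpose, fromBlocks_multiply, Matrix.sum_apply]

variable [Fintype n]

lemma brascampLiebMap_posSemidef (hp : ∀ j, 0 ≤ p j) {A : ∀ j, Matrix (κ j) (κ j) ℝ}
    (hA : ∀ j, (A j).PosSemidef) : (brascampLiebMap p B A).PosSemidef :=
  posSemidef_sum _ fun j _ => ((hA j).conjTranspose_mul_mul_same (B j)).smul (hp j)

lemma dotProduct_brascampLiebMap_mulVec (A : ∀ j, Matrix (κ j) (κ j) ℝ) (x : n → ℝ) :
    x ⬝ᵥ (brascampLiebMap p B A *ᵥ x) =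
      ∑ j, p j * ((B j *ᵥ x) ⬝ᵥ (A j *ᵥ (B j *ᵥ x))) := by
  simp only [brascampLiebMap, sum_mulVec, dotProduct_sum, smul_mulVec, dotProduct_smul,
    smul_eq_mul, ← mulVec_mulVec]
  refine Finset.sum_congr rfl fun j _ => ?_
  rw [dotProduct_mulVec, vecMul_transpose]

lemma brascampLiebMap_posDef_iff (hp : ∀ j, 0 ≤ p j) {A : ∀ j, Matrix (κ j) (κ j) ℝ}
    (hA : ∀ j, (A j).PosDef) :
    (brascampLiebMap p B A).PosDef ↔ ∀ x ≠ 0, ∃ j, p j ≠ 0 ∧ B j *ᵥ x ≠ 0 := by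
  simp only [posDef_iff_dotProduct_mulVec,
    (brascampLiebMap_posSemidef hp fun j => (hA j).posSemidef).1, star_trivial,
    dotProduct_brascampLiebMap_mulVec, true_and]
  refine forall₂_congr fun x _ => ?_
  have hterm j : 0 < p j * ((B j *ᵥ x) ⬝ᵥ (A j *ᵥ (B j *ᵥ x))) ↔
      p j ≠ 0 ∧ B j *ᵥ x ≠ 0 := by
    by_cases hy : B j *ᵥ x = 0
    · simp [hy]
    · have hpos := (hA j).dotProduct_mulVec_pos hy
      rw [star_trivial] at hpos
      rw [mul_pos_iff_of_pos_right hpos, (hp j).lt_iff_ne']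
      exact (and_iff_left hy).symm
  have hnonneg j : 0 ≤ p j * ((B j *ᵥ x) ⬝ᵥ (A j *ᵥ (B j *ᵥ x))) :=
    mul_nonneg (hp j) (by simpa using (hA j).posSemidef.dotProduct_mulVec_nonneg (B j *ᵥ x))
  simp only [Finset.sum_pos_iff_of_nonneg fun j _ => hnonneg j, Finset.mem_univ, true_and, hterm]

lemma det_brascampLiebMap_eq_zero [DecidableEq n] (hp : ∀ j, 0 ≤ p j)
    {A : ∀ j, Matrix (κ j) (κ j) ℝ} (hA : ∀ j, (A j).PosDef)
    (hB : ¬ ∀ x ≠ 0, ∃ j, p j ≠ 0 ∧ B j *ᵥ x ≠ 0) :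
    (brascampLiebMap p B A).det = 0 := by
  by_contra hdet
  exact hB <| (brascampLiebMap_posDef_iff hp hA).1 <|
    (brascampLiebMap_posSemidef hp fun j => (hA j).posSemidef).posDef_iff_det_ne_zero.2 hdet

end BrascampLieb

theorem stmt9_general {n m : ℕ} (nj : Fin m → ℕ)
    (B : ∀ j : Fin m, Matrix (Fin (nj j)) (Fin n) ℝ) (p : Fin m → ℝ)
    (hp : ∀ j, 0 ≤ p j)
    (L : (∀ j : Fin m, Matrix (Fin (nj j)) (Fin (nj j)) ℝ) → ℝ)
    (hL : ∀ A, L A = ∑ j, p j * Real.log (A j).det -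
      Real.log (∑ j, p j • ((B j)ᵀ * A j * B j)).det)
    (P Q : ∀ j : Fin m, Matrix (Fin (nj j)) (Fin (nj j)) ℝ)
    (hP : ∀ j, (P j).PosDef) (hQ : ∀ j, (Q j).PosDef) :
    L (fun j => gmean (P j) (Q j)) ≥ (1/2) * L P + (1/2) * L Q := by
  set G := fun j => gmean (P j) (Q j)
  have hG j : (G j).PosDef := gmean_posDef (hP j) (hQ j)
  have hlogG : ∑ j, p j * Real.log (G j).det = (1/2) * ∑ j, p j * Real.log (P j).det
      + (1/2) * ∑ j, p j * Real.log (Q j).det := by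
    simp only [G, log_det_gmean (hP _) (hQ _), Finset.mul_sum, ← Finset.sum_add_distrib]
    exact Finset.sum_congr rfl fun j _ => by ring
  set Φ := brascampLiebMap p B
  suffices hdet :
      Real.log (Φ G).det ≤ (1/2) * Real.log (Φ P).det + (1/2) * Real.log (Φ Q).det by
    rw [hL, hL, hL]
    unfold Φ brascampLiebMap at hdet
    linarith
  by_cases hB : ∀ x ≠ 0, ∃ j, p j ≠ 0 ∧ B j *ᵥ x ≠ 0
  · have hX := (brascampLiebMap_posDef_iff hp hP).2 hB
    have hY := (brascampLiebMap_posDef_iff hp hQ).2 hB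
    have hZ := (brascampLiebMap_posDef_iff hp hG).2 hB
    have hblock : (fromBlocks (Φ P) (Φ G) (Φ G)ᴴ (Φ Q)).PosSemidef := by
      rw [hZ.1.eq, ← brascampLiebMap_fromBlocks]
      exact brascampLiebMap_posSemidef hp fun j => fromBlocks_gmean_posSemidef (hP j) (hQ j)
    have hlog := Real.log_le_log (mul_pos hZ.det_pos hZ.det_pos)
      (det_mul_det_le_of_fromBlocks_posSemidef hX hblock)
    rw [Real.log_mul hZ.det_pos.ne' hZ.det_pos.ne', Real.log_mul hX.det_pos.ne' hY.det_pos.ne']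
      at hlog
    linarith
  -- a common kernel vector makes all three determinants vanish, and `Real.log 0 = 0`
  · simp [Φ, det_brascampLiebMap_eq_zero hp hP hB, det_brascampLiebMap_eq_zero hp hQ hB,
      det_brascampLiebMap_eq_zero hp hG hB]

theorem stmt9 {n m : ℕ} (nj : Fin m → ℕ)
    (B : ∀ j : Fin m, Matrix (Fin (nj j)) (Fin n) ℝ) (p : Fin m → ℝ)
    (hrank : ∀ j, Function.Surjective (B j).mulVecLin)
    (hp : ∀ j, 0 ≤ p j)
    (L : (∀ j : Fin m, Matrix (Fin (nj j)) (Fin (nj j)) ℝ) → ℝ)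
    (hL : ∀ A, L A = ∑ j, p j * Real.log (A j).det -
      Real.log (∑ j, p j • ((B j)ᵀ * A j * B j)).det)
    (P Q : ∀ j : Fin m, Matrix (Fin (nj j)) (Fin (nj j)) ℝ)
    (hP : ∀ j, (P j).PosDef) (hQ : ∀ j, (Q j).PosDef) :
    L (fun j => gmean (P j) (Q j)) ≥ (1/2) * L P + (1/2) * L Q :=
  stmt9_general nj B p hp L hL P Q hP hQ
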